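/- arXiv:2211.08907 — 2 statements merged into one kernel-verified Lean document; each statement's English description precedes it below -/
import Mathlib

section
/- For every n ≥ 1, the pair (x, w) = (6B_{n−1}+3C_{n−1}, 12B_{n−1}+3C_{n−1}) satisfies 2x² − w² = 9, and every positive integer solution of 2x² − w² = 9 is of this form. -/
/-!
Every balancing pair satisfies `C n ^ 2 - 8 * B n ^ 2 = 1`, and `(u, v) = (2 B + C, 4 B + C)` turns this
into `2 u ^ 2 - v ^ 2 = 1`, which gives the first half after scaling by `3`. Conversely, `2 x ^ 2 - w ^ 2 = 9`
forces `3 ∣ x` and `3 ∣ w` (as `2` is not a square mod `3`), reducing to `2 u ^ 2 - v ^ 2 = 1`. Positive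
solutions of that equation are obtained by descent: the automorphism `(u, v) ↦ (3 u - 2 v, 3 v - 4 u)`
of the form maps a positive solution other than `(1, 1)` to a strictly smaller positive one, and its
inverse `(u, v) ↦ (3 u + 2 v, 4 u + 3 v)` is the step `m ↦ m + 1` of the balancing recurrences.
-/

def B : ℕ → ℤ
  | 0 => 0
  | 1 => 1
  | (n+2) => 6 * B (n+1) - B n

def C : ℕ → ℤ
  | 0 => 1
  | 1 => 3
  | (n+2) => 6 * C (n+1) - C n

def b : ℕ → ℤ
  | 0 => 0
  | 1 => 0
  | (n+2) => 6 * b (n+1) - b n + 2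

def c : ℕ → ℤ
  | 0 => -1
  | 1 => 1
  | (n+2) => 6 * c (n+1) - c n

def P : ℕ → ℤ
  | 0 => 0
  | 1 => 1
  | (n+2) => 2 * P (n+1) + P n

theorem B_succ_and_C_succ (n : ℕ) :
    B (n + 1) = 3 * B n + C n ∧ C (n + 1) = 8 * B n + 3 * C n := by
  induction n using Nat.twoStepInduction with
  | zero => simp [B, C]
  | one => simp [B, C]
  | more n _ ih =>
    obtain ⟨hB, hC⟩ := ih
    have hB₂ : B (n + 2 + 1) = 6 * B (n + 2) - B (n + 1) := rfl
    have hC₂ : C (n + 2 + 1) = 6 * C (n + 2) - C (n + 1) := rfl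
    constructor <;> linarith

theorem B_succ (n : ℕ) : B (n + 1) = 3 * B n + C n := (B_succ_and_C_succ n).1

theorem C_succ (n : ℕ) : C (n + 1) = 8 * B n + 3 * C n := (B_succ_and_C_succ n).2

theorem C_sq_sub_eight_mul_B_sq (n : ℕ) : C n ^ 2 - 8 * B n ^ 2 = 1 := by
  induction n with
  | zero => simp [B, C]
  | succ n ih => rw [B_succ, C_succ]; linear_combination ih

theorem two_mul_sq_sub_sq_eq_one (m : ℕ) :
    2 * (2 * B m + C m) ^ 2 - (4 * B m + C m) ^ 2 = 1 := by
  linear_combination C_sq_sub_eight_mul_B_sq m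

theorem three_dvd_of_two_mul_sq_sub_sq {x w : ℤ} (h : (3 : ℤ) ∣ 2 * x ^ 2 - w ^ 2) :
    3 ∣ x ∧ 3 ∣ w := by
  have mod_three : ∀ a b : ZMod 3, 2 * a ^ 2 - b ^ 2 = 0 → a = 0 ∧ b = 0 := by decide
  have hzmod := (ZMod.intCast_zmod_eq_zero_iff_dvd _ 3).2 h
  push_cast at hzmod
  obtain ⟨hx, hw⟩ := mod_three _ _ hzmod
  exact ⟨(ZMod.intCast_zmod_eq_zero_iff_dvd x 3).1 hx, (ZMod.intCast_zmod_eq_zero_iff_dvd w 3).1 hw⟩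

theorem descent_of_two_mul_sq_sub_sq_eq_one {u v : ℤ} (h : 2 * u ^ 2 - v ^ 2 = 1)
    (hu : 1 < u) (hv : 0 < v) :
    0 < 3 * u - 2 * v ∧ 3 * u - 2 * v < u ∧ 0 < 3 * v - 4 * u := by
  have hvu : u < v := by nlinarith
  refine ⟨by nlinarith, by linarith, ?_⟩
  -- `9 v ^ 2 - 16 u ^ 2 = 2 u ^ 2 - 9` settles `u ≥ 3`; for `u = 2` use `v > u`.
  rcases (show u = 2 ∨ 3 ≤ u by omega) with rfl | hu3
  · omega
  · nlinarith

theorem exists_eq_of_two_mul_sq_sub_sq_eq_one {u v : ℤ} (h : 2 * u ^ 2 - v ^ 2 = 1)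
    (hu : 0 < u) (hv : 0 < v) : ∃ m : ℕ, u = 2 * B m + C m ∧ v = 4 * B m + C m := by
  induction hN : u.toNat using Nat.strong_induction_on generalizing u v with
  | _ N ih =>
  rcases (show u = 1 ∨ 1 < u by omega) with rfl | hu1
  · have hv1 : v = 1 := by nlinarith
    exact ⟨0, by simp [B, C, hv1]⟩
  obtain ⟨hu', hlt, hv'⟩ := descent_of_two_mul_sq_sub_sq_eq_one h hu1 hv
  obtain ⟨m, hum, hvm⟩ := ih _ (by omega) (by linear_combination h) hu' hv' rfl
  refine ⟨m + 1, ?_, ?_⟩ <;> rw [B_succ, C_succ]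
  · linear_combination 3 * hum + 2 * hvm
  · linear_combination 4 * hum + 3 * hvm

theorem pell_nine_solutions :
    (∀ n : ℕ, 1 ≤ n →
      2 * (6 * B (n - 1) + 3 * C (n - 1)) ^ 2 - (12 * B (n - 1) + 3 * C (n - 1)) ^ 2 = 9) ∧
    (∀ x w : ℤ, 0 < x → 0 < w → 2 * x ^ 2 - w ^ 2 = 9 →
      ∃ n : ℕ, 1 ≤ n ∧ x = 6 * B (n - 1) + 3 * C (n - 1) ∧
        w = 12 * B (n - 1) + 3 * C (n - 1)) := by
  refine ⟨fun n _ => by linear_combination 9 * two_mul_sq_sub_sq_eq_one (n - 1), ?_⟩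
  intro x w hx hw h
  obtain ⟨⟨u, rfl⟩, ⟨v, rfl⟩⟩ := three_dvd_of_two_mul_sq_sub_sq (x := x) (w := w) ⟨3, by rw [h]; rfl⟩
  obtain ⟨m, hum, hvm⟩ := exists_eq_of_two_mul_sq_sub_sq_eq_one (u := u) (v := v)
    (by linarith) (by linarith) (by linarith)
  refine ⟨m + 1, by omega, ?_, ?_⟩ <;> simp only [Nat.add_sub_cancel]
  · linear_combination 3 * hum
  · linear_combination 3 * hvm
end

section
/- For every n ≥ 1, (3B_n + B_{n−1} − 1)/2 = 4b_n − b_{n−1} + 1, where B_n are balancing and b_n cobalancing numbers; in particular 3B_n + B_{n−1} − 1 is even. -/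
lemma key (n : ℕ) : 3 * B (n+1) + B n - 1 = 2 * (4 * b (n+1) - b n + 1) := by
  induction n using Nat.twoStepInduction with
  | zero => simp [B, b]
  | one => norm_num [B, b]
  | more m ih1 ih2 =>
    simp only [B, b] at *
    linarith

theorem first_class_cobalancing (n : ℕ) (hn : 1 ≤ n) :
    Even (3 * B n + B (n - 1) - 1) ∧
    (3 * B n + B (n - 1) - 1) / 2 = 4 * b n - b (n - 1) + 1 := by
  obtain ⟨m, rfl⟩ := Nat.exists_eq_add_of_le hn
  rw [Nat.add_comm 1 m]
  simp only [Nat.add_sub_cancel]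
  have h := key m
  constructor
  · exact ⟨4 * b (m+1) - b m + 1, by linarith⟩
  · omega
end
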